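/- arXiv:1104.4703 — 5 statements merged into one kernel-verified Lean document; each statement's English description precedes it below -/
import Mathlib

section
/- Let n > 1 be squarefree, ω = e^{2πi/n}, Φ_n(z) = ∑_{j=0}^{φ(n)} c_j z^j, A ⊆ {0,…,φ(n)}, A₀ = {φ(n)+1,…,n−1}, and 𝓑(A) the group of restrictions to A ∪ A₀ of integer functions f on ℤ/n with ∑_x f(x)ω^x = 0. If integers (α_j)_{j∈A} satisfy ∑_{j∈A} α_j g_j ∈ 𝓑(A) (where g_j is the indicator of j), then there exists r ∈ ℤ with α_j = r·c_j for all j ∈ A. -/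
open Complex in
/-- Minimal relation: if `∑_{j∈A} α_j g_j` lies in `𝓑(A)` (restrictions to `A∪A₀` of
functions `f : ℤ/n → ℤ` with `∑_x f(x)ω^x = 0`), then `α_j = r·c_j` for some `r ∈ ℤ`,
where `c_j` are the coefficients of the `n`-th cyclotomic polynomial. -/
theorem stmt13 (n : ℕ) [NeZero n] (hn : 1 < n) (hsf : Squarefree n)
    (A : Finset ℕ) (hA : A ⊆ Finset.range (Nat.totient n + 1))
    (α : ℕ → ℤ)
    (h : ∃ f : ZMod n → ℤ,
      (∑ v : ZMod n, (f v : ℂ) * Complex.exp (2 * Real.pi * I / n) ^ (v.val) = 0) ∧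
      ∀ s : ↥(A ∪ Finset.Ico (Nat.totient n + 1) n),
        (∑ j ∈ A, α j * (if (s : ℕ) = j then 1 else 0)) = f (((s : ℕ) : ZMod n))) :
    ∃ r : ℤ, ∀ j ∈ A, α j = r * (Polynomial.cyclotomic n ℤ).coeff j := by
  classical
  obtain ⟨f, hsum, hres⟩ := h
  have hn0 : (n : ℕ) ≠ 0 := NeZero.ne n
  set φn := Nat.totient n with hφ
  have hφlt : φn < n := Nat.totient_lt n hn
  set ω : ℂ := Complex.exp (2 * Real.pi * I / n) with hω
  set F : ℕ → ℤ := fun j => f ((j : ℕ) : ZMod n) with hF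
  -- F vanishes on A₀
  have hf0 : ∀ j, φn < j → j < n → F j = 0 := by
    intro j hj1 hj2
    have hmem : j ∈ A ∪ Finset.Ico (φn + 1) n := by
      apply Finset.mem_union_right
      simp only [Finset.mem_Ico]; omega
    have hh : (∑ i ∈ A, α i * if j = i then 1 else 0) = F j := hres ⟨j, hmem⟩
    rw [← hh]
    apply Finset.sum_eq_zero
    intro i hi
    have hji : j ≠ i := by
      have := hA hi; simp only [Finset.mem_range] at this; omega
    simp [hji]
  have hfA : ∀ j ∈ A, F j = α j := by
    intro j hj
    have hmem : j ∈ A ∪ Finset.Ico (φn + 1) n := Finset.mem_union_left _ hj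
    have hh : (∑ i ∈ A, α i * if j = i then 1 else 0) = F j := hres ⟨j, hmem⟩
    rw [← hh]
    rw [Finset.sum_congr rfl (fun i _ => by rw [mul_ite, mul_one, mul_zero]),
      Finset.sum_ite_eq]
    simp [hj]
  -- the polynomial
  set P : Polynomial ℤ := ∑ j ∈ Finset.range (φn + 1), Polynomial.C (F j) * Polynomial.X ^ j
    with hP
  have hPcoeff : ∀ j < φn + 1, P.coeff j = F j := by
    intro j hj
    rw [hP, Polynomial.finset_sum_coeff]
    rw [Finset.sum_congr rfl (fun i _ => by
      rw [Polynomial.coeff_C_mul, Polynomial.coeff_X_pow, mul_ite, mul_one, mul_zero]),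
      Finset.sum_ite_eq]
    simp [Finset.mem_range, hj]
  -- sum over ZMod n equals sum over range n
  have hsum1 : ∑ j ∈ Finset.range n, (F j : ℂ) * ω ^ j = 0 := by
    rw [← hsum]
    apply Finset.sum_nbij' (i := fun j => ((j : ℕ) : ZMod n)) (j := fun v => v.val)
    · intro a _; exact Finset.mem_univ _
    · intro v _; exact Finset.mem_range.mpr (ZMod.val_lt v)
    · intro a ha; exact ZMod.val_natCast_of_lt (Finset.mem_range.mp ha)
    · intro v _; simp [ZMod.natCast_val, ZMod.cast_id]
    · intro a ha
      rw [ZMod.val_natCast_of_lt (Finset.mem_range.mp ha)]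
  have hsum2 : ∑ j ∈ Finset.range (φn + 1), (F j : ℂ) * ω ^ j = 0 := by
    rw [← hsum1]
    apply Finset.sum_subset
    · intro x hx
      simp only [Finset.mem_range] at hx ⊢; omega
    · intro x hx hx'
      simp only [Finset.mem_range, not_lt] at hx hx'
      rw [hf0 x (by omega) hx]
      simp
  -- P evaluated at ω is 0
  have hev : Polynomial.eval₂ (Int.castRingHom ℂ) ω P = 0 := by
    rw [hP, Polynomial.eval₂_finset_sum]
    rw [← hsum2]
    apply Finset.sum_congr rfl
    intro j _
    rw [Polynomial.eval₂_mul, Polynomial.eval₂_C, Polynomial.eval₂_X_pow]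
    simp
  -- divisibility over ℚ, then ℤ
  have hprim : IsPrimitiveRoot ω n := Complex.isPrimitiveRoot_exp n hn0
  have hroot : Polynomial.aeval ω (P.map (Int.castRingHom ℚ)) = 0 := by
    rw [Polynomial.aeval_def, Polynomial.eval₂_map]
    rw [show (algebraMap ℚ ℂ).comp (Int.castRingHom ℚ) = Int.castRingHom ℂ from
      Subsingleton.elim _ _]
    exact hev
  have hmin : Polynomial.cyclotomic n ℚ = minpoly ℚ ω :=
    Polynomial.cyclotomic_eq_minpoly_rat hprim (by omega)
  have hdvdQ : Polynomial.cyclotomic n ℚ ∣ P.map (Int.castRingHom ℚ) := by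
    rw [hmin]; exact minpoly.dvd ℚ ω hroot
  have hdvd : Polynomial.cyclotomic n ℤ ∣ P := by
    rw [← Polynomial.map_cyclotomic_int n ℚ] at hdvdQ
    exact (Polynomial.map_dvd_map _ Int.cast_injective (Polynomial.cyclotomic.monic n ℤ)).mp hdvdQ
  -- degree bound
  have hdeg : P.natDegree ≤ φn := by
    apply Polynomial.natDegree_sum_le_of_forall_le
    intro i hi
    exact le_trans (Polynomial.natDegree_C_mul_X_pow_le _ _)
      (by simpa [Nat.lt_succ_iff] using Finset.mem_range.mp hi)
  obtain ⟨Q, hPQ⟩ := hdvd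
  have hrex : ∃ r : ℤ, P = Polynomial.cyclotomic n ℤ * Polynomial.C r := by
    by_cases hP0 : P = 0
    · exact ⟨0, by simp [hP0]⟩
    · have hQ0 : Q ≠ 0 := by
        rintro rfl; rw [mul_zero] at hPQ; exact hP0 hPQ
      have hdd : P.natDegree = φn + Q.natDegree := by
        rw [hPQ, Polynomial.natDegree_mul (Polynomial.cyclotomic_ne_zero n ℤ) hQ0,
          Polynomial.natDegree_cyclotomic]
      have hQdeg : Q.natDegree = 0 := by omega
      exact ⟨Q.coeff 0, by rw [hPQ]; congr 1; exact Polynomial.eq_C_of_natDegree_eq_zero hQdeg⟩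
  obtain ⟨r, hr⟩ := hrex
  refine ⟨r, fun j hj => ?_⟩
  have hjφ : j < φn + 1 := by have := hA hj; simpa using this
  have h1 : P.coeff j = r * (Polynomial.cyclotomic n ℤ).coeff j := by
    rw [hr, Polynomial.coeff_mul_C]; ring
  rw [← hfA j hj, ← hPcoeff j hjφ, h1]
end

section
/- Let n > 1 be squarefree, Φ_n(z) = ∑_{j=0}^{φ(n)} c_j z^j, A ⊆ {0,…,φ(n)}, A₀ = {φ(n)+1,…,n−1}, ω = e^{2πi/n}, and 𝓑(A) = {f restricted to A∪A₀ : f ∈ ℤ[ℤ/n], ∑_x f(x)ω^x = 0}. Then the quotient group ℤ[A∪A₀]/𝓑(A) is isomorphic to ℤ^A / ℤ·c_A, where c_A = (c_j)_{j∈A}, and hence isomorphic to ℤ^{|A|−1} ⊕ ℤ/d_Aℤ where d_A = gcd{c_j : j ∈ A} (and d_A = 0 if all c_j with j ∈ A vanish). -/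
open Finset AddSubgroup

private lemma bezout {ι : Type*} [Fintype ι] (u : ι → ℤ) (h : univ.gcd u = 1) :
    ∃ w : ι → ℤ, ∑ i, w i * u i = 1 := by
  set I : Ideal ℤ := Ideal.span (Set.range u) with hI
  have hgen : (1 : ℤ) ∈ I := by
    rw [← Ideal.span_singleton_generator I, Ideal.mem_span_singleton]
    refine Dvd.dvd.trans ?_ h.dvd
    refine Finset.dvd_gcd fun i _ => ?_
    rw [← Ideal.mem_span_singleton, Ideal.span_singleton_generator I]
    exact Ideal.subset_span ⟨i, rfl⟩
  rw [hI, Ideal.span, Submodule.mem_span_range_iff_exists_fun] at hgen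
  obtain ⟨c, hc⟩ := hgen
  exact ⟨c, by simpa [smul_eq_mul] using hc⟩

private lemma quotB {ι : Type*} [Fintype ι] [DecidableEq ι] [Nonempty ι] (v : ι → ℤ) :
    Nonempty (((ι → ℤ) ⧸ zmultiples v) ≃+
      ((Fin (Fintype.card ι - 1) → ℤ) × ZMod (univ.gcd v).toNat)) := by
  classical
  set d : ℕ := (univ.gcd v).toNat with hd
  obtain ⟨u, w, huw, hv⟩ : ∃ (u w : ι → ℤ), ∑ i, w i * u i = 1 ∧ v = (d : ℤ) • u := by
    by_cases h0 : v = 0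
    · obtain ⟨i0⟩ := ‹Nonempty ι›
      have hd0 : d = 0 := by
        have : univ.gcd v = 0 := Finset.gcd_eq_zero_iff.mpr (by simp [h0])
        simp [hd, this]
      refine ⟨Pi.single i0 1, Pi.single i0 1, ?_, ?_⟩
      · rw [Finset.sum_eq_single i0] <;> simp +contextual [Pi.single_apply]
      · simp [hd0, h0]
    · set g := univ.gcd v with hg
      have hgpos : 0 ≤ g := Int.nonneg_of_normalize_eq_self Finset.normalize_gcd
      have hdvd : ∀ i, g ∣ v i := fun i => Finset.gcd_dvd (mem_univ i)
      have hgd : (d : ℤ) = g := Int.toNat_of_nonneg hgpos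
      obtain ⟨i0, hi0⟩ : ∃ i, v i ≠ 0 := by
        by_contra hc; push_neg at hc; exact h0 (funext hc)
      refine ⟨fun i => v i / g, ?_⟩
      have h1 : univ.gcd (fun i => v i / g) = 1 :=
        Finset.gcd_div_eq_one (mem_univ i0) hi0
      obtain ⟨w, hw⟩ := bezout _ h1
      exact ⟨w, hw, funext fun i => by
        simp only [Pi.smul_apply, smul_eq_mul, hgd]
        exact (Int.mul_ediv_cancel' (hdvd i)).symm⟩
  -- linear functional
  let φ : (ι → ℤ) →ₗ[ℤ] ℤ :=
    { toFun := fun x => ∑ i, w i * x i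
      map_add' := by intros; simp [mul_add, Finset.sum_add_distrib]
      map_smul' := by intros; simp [Finset.mul_sum, mul_left_comm] }
  have hφu : φ u = 1 := huw
  set K := LinearMap.ker φ with hK
  have hmem : ∀ x : ι → ℤ, x - φ x • u ∈ K := by
    intro x
    rw [hK, LinearMap.mem_ker, map_sub, map_smul, hφu, smul_eq_mul, mul_one, sub_self]
  obtain ⟨m, b⟩ := Submodule.basisOfPid (Pi.basisFun ℤ ι) K
  haveI : Module.Free ℤ K := Module.Free.of_basis b
  haveI : Module.Finite ℤ K := Module.Finite.of_basis b
  -- splitting equivalence, for rank count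
  have hm : m = Fintype.card ι - 1 := by
    let f : (ι → ℤ) →ₗ[ℤ] ℤ × K :=
      LinearMap.prod φ
        ((LinearMap.id - (LinearMap.toSpanSingleton ℤ _ u).comp φ).codRestrict K hmem)
    let g : ℤ × K →ₗ[ℤ] (ι → ℤ) :=
      (LinearMap.toSpanSingleton ℤ _ u).comp (LinearMap.fst ℤ ℤ K) +
        (K.subtype).comp (LinearMap.snd ℤ ℤ K)
    have h1 : f.comp g = LinearMap.id := by
      apply LinearMap.ext; rintro ⟨c, k⟩
      have hk : φ (k : ι → ℤ) = 0 := k.2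
      apply Prod.ext
      · show φ (c • u + (k : ι → ℤ)) = c
        rw [map_add, map_smul, hφu, hk, smul_eq_mul, mul_one, add_zero]
      · apply Subtype.ext
        show (c • u + (k : ι → ℤ)) - φ (c • u + (k : ι → ℤ)) • u = (k : ι → ℤ)
        rw [map_add, map_smul, hφu, hk, smul_eq_mul, mul_one, add_zero]
        abel
    have h2 : g.comp f = LinearMap.id := by
      apply LinearMap.ext; intro x
      show φ x • u + (x - φ x • u) = x
      abel
    have hfr := LinearEquiv.finrank_eq (LinearEquiv.ofLinear f g h1 h2)
    rw [Module.finrank_prod, Module.finrank_self, Module.finrank_eq_card_basis b,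
      Fintype.card_fin] at hfr
    have : Module.finrank ℤ (ι → ℤ) = Fintype.card ι := Module.finrank_pi ℤ
    have hcard : 0 < Fintype.card ι := Fintype.card_pos
    omega
  subst hm
  -- the classifying homomorphism
  have hψadd : ∀ x y : ι → ℤ,
      (⟨x + y - φ (x + y) • u, hmem (x + y)⟩ : K) =
        ⟨x - φ x • u, hmem x⟩ + ⟨y - φ y • u, hmem y⟩ := by
    intro x y
    apply Subtype.ext
    show x + y - φ (x + y) • u = (x - φ x • u) + (y - φ y • u)
    rw [map_add, add_smul]
    abel
  let Ψ : (ι → ℤ) →+ (Fin (Fintype.card ι - 1) → ℤ) × ZMod d :=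
    { toFun := fun x => (b.equivFun ⟨x - φ x • u, hmem x⟩, ((φ x : ℤ) : ZMod d))
      map_zero' := by
        have h0 : (⟨(0 : ι → ℤ) - φ 0 • u, hmem 0⟩ : K) = 0 := by
          apply Subtype.ext
          show (0 : ι → ℤ) - φ 0 • u = 0
          rw [map_zero, zero_smul, sub_zero]
        show (b.equivFun ⟨(0 : ι → ℤ) - φ 0 • u, hmem 0⟩, ((φ (0 : ι → ℤ) : ℤ) : ZMod d)) = 0
        rw [h0, LinearEquiv.map_zero, map_zero]
        simp
      map_add' := fun x y => by
        show (b.equivFun ⟨x + y - φ (x + y) • u, hmem _⟩, ((φ (x + y) : ℤ) : ZMod d)) =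
          (b.equivFun ⟨x - φ x • u, hmem x⟩, ((φ x : ℤ) : ZMod d)) +
            (b.equivFun ⟨y - φ y • u, hmem y⟩, ((φ y : ℤ) : ZMod d))
        rw [hψadd x y, map_add, map_add]
        push_cast
        rfl }
  have hsurj : Function.Surjective Ψ := by
    rintro ⟨y, cbar⟩
    obtain ⟨c, rfl⟩ := ZMod.intCast_surjective cbar
    set k : K := b.equivFun.symm y with hk
    refine ⟨c • u + (k : ι → ℤ), ?_⟩
    have hφx : φ (c • u + (k : ι → ℤ)) = c := by
      rw [map_add, map_smul, hφu, LinearMap.mem_ker.mp k.2, smul_eq_mul, mul_one, add_zero]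
    have hsub : (⟨c • u + (k : ι → ℤ) - φ (c • u + (k : ι → ℤ)) • u,
        hmem _⟩ : K) = k := by
      apply Subtype.ext
      show c • u + (k : ι → ℤ) - φ (c • u + (k : ι → ℤ)) • u = (k : ι → ℤ)
      rw [hφx]; abel
    show (b.equivFun _, _) = (y, _)
    rw [hsub, hφx, hk, LinearEquiv.apply_symm_apply]
  have hker : Ψ.ker = zmultiples v := by
    ext x
    constructor
    · intro hx
      have h1 : b.equivFun ⟨x - φ x • u, hmem x⟩ = 0 := congrArg Prod.fst hx
      have h2 : ((φ x : ℤ) : ZMod d) = 0 := congrArg Prod.snd hx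
      have h3 : (⟨x - φ x • u, hmem x⟩ : K) = 0 := by
        apply b.equivFun.injective
        rw [h1, LinearEquiv.map_zero]
      have h4 : x = φ x • u := by
        have := congrArg (Subtype.val) h3
        simp only [Submodule.coe_zero] at this
        have : x - φ x • u = 0 := this
        linear_combination (norm := abel) this
      obtain ⟨t, ht⟩ := (ZMod.intCast_zmod_eq_zero_iff_dvd _ _).mp h2
      refine mem_zmultiples_iff.mpr ⟨t, ?_⟩
      rw [hv, smul_smul, mul_comm, ← ht, ← h4]
    · intro hx
      obtain ⟨t, rfl⟩ := mem_zmultiples_iff.mp hx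
      have hφv : φ (t • v) = t * d := by
        rw [map_smul, hv, map_smul, hφu, smul_eq_mul, smul_eq_mul, mul_one]
      have h5 : (⟨t • v - φ (t • v) • u, hmem _⟩ : K) = 0 := by
        apply Subtype.ext
        show t • v - φ (t • v) • u = 0
        rw [hφv, hv, smul_smul, sub_self]
      rw [AddMonoidHom.mem_ker]
      show (b.equivFun ⟨t • v - φ (t • v) • u, hmem _⟩, ((φ (t • v) : ℤ) : ZMod d)) = 0
      rw [h5, LinearEquiv.map_zero, hφv]
      have hz : (((t * (d : ℤ)) : ℤ) : ZMod d) = 0 :=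
        (ZMod.intCast_zmod_eq_zero_iff_dvd _ _).mpr ⟨t, mul_comm t d⟩
      rw [hz]
      rfl
  exact ⟨(QuotientAddGroup.quotientAddEquivOfEq hker.symm).trans
    (QuotientAddGroup.quotientKerEquivOfSurjective Ψ hsurj)⟩

open Polynomial Finset

private lemma aeval_eq_sum_coeff {n : ℕ} (hn : 0 < n) (Q : ℤ[X])
    (hQ : ∀ j, n ≤ j → Q.coeff j = 0) (z : ℂ) :
    aeval z Q = ∑ i ∈ Finset.range n, (Q.coeff i : ℂ) * z ^ i := by
  have hdeg : Q.natDegree < n := by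
    by_cases h : Q = 0
    · simpa [h] using hn
    · by_contra hc
      push_neg at hc
      exact h (Polynomial.leadingCoeff_eq_zero.mp (hQ _ hc))
  rw [aeval_eq_sum_range' hdeg]
  refine Finset.sum_congr rfl fun i _ => ?_
  rw [zsmul_eq_mul]

private lemma sum_zmod (n : ℕ) [NeZero n] (g : ℕ → ℂ) :
    ∑ v : ZMod n, g (v.val) = ∑ i ∈ Finset.range n, g i := by
  rw [← Fin.sum_univ_eq_sum_range]
  apply Fintype.sum_bijective (fun v : ZMod n => (⟨v.val, ZMod.val_lt v⟩ : Fin n))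
  · rw [Fintype.bijective_iff_injective_and_card]
    constructor
    · intro v w h
      have : v.val = w.val := congrArg Fin.val h
      exact ZMod.val_injective n this
    · simp [ZMod.card]
  · intro v; rfl

-- polynomial from a function with vanishing exponential sum
private lemma poly_of_f (n : ℕ) [NeZero n] (hn : 0 < n) (f : ZMod n → ℤ)
    (hf : ∑ v : ZMod n, (f v : ℂ) * Complex.exp (2 * Real.pi * Complex.I / n) ^ (v.val) = 0) :
    ∃ Q : ℤ[X], (Polynomial.cyclotomic n ℤ ∣ Q) ∧ (∀ j, n ≤ j → Q.coeff j = 0) ∧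
      (∀ j, j < n → Q.coeff j = f ((j : ZMod n))) := by
  set ω := Complex.exp (2 * Real.pi * Complex.I / n) with hω
  have hprim : IsPrimitiveRoot ω n := Complex.isPrimitiveRoot_exp n (NeZero.ne n)
  set Q : ℤ[X] := ∑ v : ZMod n, C (f v) * X ^ (v.val) with hQ
  have hcoeff : ∀ j, Q.coeff j = ∑ v : ZMod n, if v.val = j then f v else 0 := by
    intro j
    rw [hQ, Polynomial.finset_sum_coeff]
    refine Finset.sum_congr rfl fun v _ => ?_
    rw [Polynomial.coeff_C_mul, Polynomial.coeff_X_pow]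
    by_cases h : v.val = j
    · simp [h]
    · simp [h, Ne.symm h]
  have hhigh : ∀ j, n ≤ j → Q.coeff j = 0 := by
    intro j hj
    rw [hcoeff]
    refine Finset.sum_eq_zero fun v _ => ?_
    have := ZMod.val_lt v
    rw [if_neg (by omega)]
  have hlow : ∀ j, j < n → Q.coeff j = f ((j : ZMod n)) := by
    intro j hj
    rw [hcoeff]
    rw [Finset.sum_eq_single ((j : ZMod n))]
    · rw [if_pos (ZMod.val_cast_of_lt hj)]
    · intro v _ hv
      rw [if_neg]
      intro hc
      exact hv (by rw [← hc]; exact (ZMod.natCast_rightInverse v).symm)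
    · simp
  refine ⟨Q, ?_, hhigh, hlow⟩
  have haev : aeval ω Q = 0 := by
    rw [hQ]
    rw [map_sum]
    rw [← hf]
    refine Finset.sum_congr rfl fun v _ => ?_
    simp [algebraMap_int_eq]
  rw [Polynomial.cyclotomic_eq_minpoly hprim hn]
  exact minpoly.isIntegrallyClosed_dvd (hprim.isIntegral hn) haev

private lemma f_of_poly (n : ℕ) [NeZero n] (hn : 0 < n) (Q : ℤ[X])
    (hdvd : Polynomial.cyclotomic n ℤ ∣ Q) (hhigh : ∀ j, n ≤ j → Q.coeff j = 0) :
    ∑ v : ZMod n, ((Q.coeff v.val : ℂ)) * Complex.exp (2 * Real.pi * Complex.I / n) ^ (v.val)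
      = 0 := by
  set ω := Complex.exp (2 * Real.pi * Complex.I / n) with hω
  have hprim : IsPrimitiveRoot ω n := Complex.isPrimitiveRoot_exp n (NeZero.ne n)
  have hroot : aeval ω (Polynomial.cyclotomic n ℤ) = 0 := by
    rw [aeval_def, eval₂_eq_eval_map, map_cyclotomic]
    exact hprim.isRoot_cyclotomic hn
  obtain ⟨h, rfl⟩ := hdvd
  have : ∑ v : ZMod n, ((((cyclotomic n ℤ) * h).coeff v.val : ℂ)) * ω ^ (v.val)
      = aeval ω ((cyclotomic n ℤ) * h) := by
    rw [aeval_eq_sum_coeff hn _ hhigh ω]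
    exact sum_zmod n fun i => (((cyclotomic n ℤ) * h).coeff i : ℂ) * ω ^ i
  rw [this, map_mul, hroot, zero_mul]

-- the triangular solve via division with remainder
private lemma solve (n : ℕ) (hn : 1 < n) (t : ℕ → ℤ) :
    ∃ Q : ℤ[X], (Polynomial.cyclotomic n ℤ ∣ Q) ∧ (∀ j, n ≤ j → Q.coeff j = 0) ∧
      (∀ j, Nat.totient n + 1 ≤ j → j < n → Q.coeff j = t j) := by
  have hmonic : (cyclotomic n ℤ).Monic := cyclotomic.monic n ℤ
  set T : ℤ[X] := ∑ j ∈ Finset.Ico (Nat.totient n + 1) n, C (t j) * X ^ j with hT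
  have hTcoeff : ∀ j, T.coeff j = if j ∈ Finset.Ico (Nat.totient n + 1) n then t j else 0 := by
    intro j
    rw [hT, Polynomial.finset_sum_coeff]
    rw [← Finset.sum_ite_eq' (Finset.Ico (Nat.totient n + 1) n) j t]
    refine Finset.sum_congr rfl fun k _ => ?_
    rw [Polynomial.coeff_C_mul, Polynomial.coeff_X_pow]
    by_cases h : k = j
    · simp [h]
    · simp [h, Ne.symm h]
  have hmod : ∀ j, Nat.totient n + 1 ≤ j → (T %ₘ (cyclotomic n ℤ)).coeff j = 0 := by
    intro j hj
    refine Polynomial.coeff_eq_zero_of_degree_lt (lt_of_lt_of_le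
      (Polynomial.degree_modByMonic_lt T hmonic) ?_)
    rw [Polynomial.degree_cyclotomic]
    exact_mod_cast (show Nat.totient n ≤ j by omega)
  refine ⟨T - T %ₘ (cyclotomic n ℤ), ⟨T /ₘ (cyclotomic n ℤ), by
    rw [Polynomial.modByMonic_eq_sub_mul_div _ (cyclotomic n ℤ)]; ring⟩, ?_, ?_⟩
  · intro j hj
    rw [Polynomial.coeff_sub, hTcoeff, hmod j (by have := Nat.totient_lt n hn; omega),
      if_neg (by simp [Finset.mem_Ico]; omega), sub_zero]
  · intro j hj1 hj2
    rw [Polynomial.coeff_sub, hTcoeff, hmod j hj1, if_pos (Finset.mem_Ico.mpr ⟨hj1, hj2⟩),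
      sub_zero]

private lemma rigid (n : ℕ) (hn : 1 < n) (Q : ℤ[X])
    (hdvd : Polynomial.cyclotomic n ℤ ∣ Q) (hhigh : ∀ j, n ≤ j → Q.coeff j = 0)
    (hmid : ∀ j, Nat.totient n + 1 ≤ j → j < n → Q.coeff j = 0) :
    ∃ m : ℤ, Q = C m * Polynomial.cyclotomic n ℤ := by
  obtain ⟨h, rfl⟩ := hdvd
  by_cases h0 : h = 0
  · exact ⟨0, by simp [h0]⟩
  have hne : (cyclotomic n ℤ) ≠ 0 := cyclotomic_ne_zero n ℤ
  have hdeg : ((cyclotomic n ℤ) * h).natDegree ≤ Nat.totient n := by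
    refine Polynomial.natDegree_le_iff_coeff_eq_zero.mpr fun N hN => ?_
    by_cases hNn : n ≤ N
    · exact hhigh N hNn
    · exact hmid N (by omega) (by omega)
  rw [Polynomial.natDegree_mul hne h0, Polynomial.natDegree_cyclotomic] at hdeg
  have : h.natDegree = 0 := by omega
  obtain ⟨m, hm⟩ := Polynomial.natDegree_eq_zero.mp this
  exact ⟨m, by rw [← hm, mul_comm]⟩

open Polynomial Finset AddSubgroup

private lemma core (n : ℕ) [NeZero n] (hn : 1 < n)
    (A : Finset ℕ) (hA : A ⊆ Finset.range (Nat.totient n + 1)) (hAne : A.Nonempty)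
    (B : AddSubgroup (↥(A ∪ Finset.Ico (Nat.totient n + 1) n) → ℤ))
    (hmemB : ∀ x : ↥(A ∪ Finset.Ico (Nat.totient n + 1) n) → ℤ, x ∈ B ↔ ∃ Q : ℤ[X],
      (Polynomial.cyclotomic n ℤ ∣ Q) ∧ (∀ j, n ≤ j → Q.coeff j = 0) ∧
      ∀ s : ↥(A ∪ Finset.Ico (Nat.totient n + 1) n), x s = Q.coeff (s : ℕ)) :
    Nonempty (((↥(A ∪ Finset.Ico (Nat.totient n + 1) n) → ℤ) ⧸ B) ≃+
      ((↥A → ℤ) ⧸ AddSubgroup.zmultiples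
        (fun j : ↥A => (Polynomial.cyclotomic n ℤ).coeff (j : ℕ)))) ∧
    Nonempty (((↥(A ∪ Finset.Ico (Nat.totient n + 1) n) → ℤ) ⧸ B) ≃+
      ((Fin (A.card - 1) → ℤ) ×
        ZMod (A.gcd fun j => (Polynomial.cyclotomic n ℤ).coeff j).toNat)) := by
  classical
  have hnpos : 0 < n := by omega
  have htot : Nat.totient n < n := Nat.totient_lt n hn
  set cA : ↥A → ℤ := fun j : ↥A => (Polynomial.cyclotomic n ℤ).coeff (j : ℕ) with hcA
  have hmemS : ∀ j : ↥A, (j : ℕ) ∈ A ∪ Finset.Ico (Nat.totient n + 1) n :=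
    fun j => Finset.mem_union_left _ j.2
  let q : (↥A → ℤ) →+ (↥(A ∪ Finset.Ico (Nat.totient n + 1) n) → ℤ) :=
    { toFun := fun a s => if h : (s : ℕ) ∈ A then a ⟨s, h⟩ else 0
      map_zero' := by funext s; simp
      map_add' := fun a b => by
        funext s
        by_cases h : (s : ℕ) ∈ A <;> simp [h] }
  have hq_apply : ∀ (a : ↥A → ℤ) (j : ↥A), q a ⟨(j : ℕ), hmemS j⟩ = a j := by
    intro a j
    show (if h : (j : ℕ) ∈ A then a ⟨j, h⟩ else 0) = a j
    rw [dif_pos j.2]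
  let π : (↥A → ℤ) →+ ((↥(A ∪ Finset.Ico (Nat.totient n + 1) n) → ℤ) ⧸ B) :=
    (QuotientAddGroup.mk' B).comp q
  have hπsurj : Function.Surjective π := by
    intro xq
    obtain ⟨x, rfl⟩ := QuotientAddGroup.mk'_surjective B xq
    obtain ⟨Q, hQ1, hQ2, hQ3⟩ := solve n hn
      (fun j => if h : j ∈ A ∪ Finset.Ico (Nat.totient n + 1) n then x ⟨j, h⟩ else 0)
    refine ⟨fun j : ↥A => x ⟨(j : ℕ), hmemS j⟩ - Q.coeff (j : ℕ), ?_⟩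
    show QuotientAddGroup.mk' B _ = QuotientAddGroup.mk' B x
    rw [QuotientAddGroup.mk'_eq_mk']
    refine ⟨x - q _, ?_, by abel⟩
    rw [hmemB]
    refine ⟨Q, hQ1, hQ2, fun s => ?_⟩
    by_cases h : (s : ℕ) ∈ A
    · have hseq : (⟨(s : ℕ), hmemS ⟨s, h⟩⟩ :
          ↥(A ∪ Finset.Ico (Nat.totient n + 1) n)) = s := Subtype.ext rfl
      show x s - q _ s = _
      have : q (fun j : ↥A => x ⟨(j : ℕ), hmemS j⟩ - Q.coeff (j : ℕ)) s =
          x s - Q.coeff (s : ℕ) := by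
        show (if hh : (s : ℕ) ∈ A then x ⟨(s:ℕ), hmemS ⟨s, hh⟩⟩ - Q.coeff (s:ℕ) else 0) = _
        rw [dif_pos h, hseq]
      rw [this]
      ring
    · have hs' : (s : ℕ) ∈ Finset.Ico (Nat.totient n + 1) n := by
        rcases Finset.mem_union.mp s.2 with h' | h'
        · exact absurd h' h
        · exact h'
      have hIco := Finset.mem_Ico.mp hs'
      show x s - q _ s = _
      have : q (fun j : ↥A => x ⟨(j : ℕ), hmemS j⟩ - Q.coeff (j : ℕ)) s = 0 := dif_neg h
      rw [this, sub_zero, hQ3 _ hIco.1 hIco.2, dif_pos s.2]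
  have hπker : π.ker = zmultiples cA := by
    ext a
    have hqB : π a = 0 ↔ q a ∈ B := QuotientAddGroup.eq_zero_iff (q a)
    rw [AddMonoidHom.mem_ker, hqB, hmemB]
    constructor
    · rintro ⟨Q, hQ1, hQ2, hQ3⟩
      have hmid : ∀ j, Nat.totient n + 1 ≤ j → j < n → Q.coeff j = 0 := by
        intro j hj1 hj2
        have hjS : j ∈ A ∪ Finset.Ico (Nat.totient n + 1) n :=
          Finset.mem_union_right _ (Finset.mem_Ico.mpr ⟨hj1, hj2⟩)
        have hjA : j ∉ A := fun hc => by have := Finset.mem_range.mp (hA hc); omega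
        have h5 := hQ3 ⟨j, hjS⟩
        rw [show q a ⟨j, hjS⟩ = 0 from dif_neg hjA] at h5
        exact h5.symm
      obtain ⟨m, hm⟩ := rigid n hn Q hQ1 hQ2 hmid
      refine mem_zmultiples_iff.mpr ⟨m, funext fun j => ?_⟩
      have h6 := hQ3 ⟨(j : ℕ), hmemS j⟩
      rw [hq_apply a j, hm] at h6
      rw [Pi.smul_apply, smul_eq_mul, hcA, ← Polynomial.coeff_C_mul, ← h6]
    · intro ha
      obtain ⟨m, hm⟩ := mem_zmultiples_iff.mp ha
      refine ⟨C m * Polynomial.cyclotomic n ℤ, ⟨C m, mul_comm _ _⟩, ?_, ?_⟩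
      · intro j hj
        have hdegle : (C m * Polynomial.cyclotomic n ℤ).natDegree < j := by
          have h7 := Polynomial.natDegree_C_mul_le m (Polynomial.cyclotomic n ℤ)
          rw [Polynomial.natDegree_cyclotomic] at h7
          omega
        exact Polynomial.coeff_eq_zero_of_natDegree_lt hdegle
      · intro s
        by_cases h : (s : ℕ) ∈ A
        · show (if hh : (s : ℕ) ∈ A then a ⟨s, hh⟩ else 0) = _
          rw [dif_pos h, ← hm, Pi.smul_apply, smul_eq_mul, hcA, ← Polynomial.coeff_C_mul]
        · have hs' : (s : ℕ) ∈ Finset.Ico (Nat.totient n + 1) n := by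
            rcases Finset.mem_union.mp s.2 with h' | h'
            · exact absurd h' h
            · exact h'
          have hIco := Finset.mem_Ico.mp hs'
          show (if hh : (s : ℕ) ∈ A then a ⟨s, hh⟩ else 0) = _
          rw [dif_neg h]
          have hdegle : (C m * Polynomial.cyclotomic n ℤ).natDegree < (s : ℕ) := by
            have h7 := Polynomial.natDegree_C_mul_le m (Polynomial.cyclotomic n ℤ)
            rw [Polynomial.natDegree_cyclotomic] at h7
            omega
          exact (Polynomial.coeff_eq_zero_of_natDegree_lt hdegle).symm
  have e1 : ((↥A → ℤ) ⧸ zmultiples cA) ≃+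
      ((↥(A ∪ Finset.Ico (Nat.totient n + 1) n) → ℤ) ⧸ B) :=
    (QuotientAddGroup.quotientAddEquivOfEq hπker.symm).trans
      (QuotientAddGroup.quotientKerEquivOfSurjective π hπsurj)
  haveI : Nonempty ↥A := ⟨⟨hAne.choose, hAne.choose_spec⟩⟩
  constructor
  · exact ⟨e1.symm⟩
  · obtain ⟨e2⟩ := quotB cA
    have hgcd : (univ.gcd cA) = A.gcd (fun j => (Polynomial.cyclotomic n ℤ).coeff j) := by
      rw [show (univ : Finset ↥A) = A.attach from rfl]
      conv_rhs => rw [← Finset.attach_image_val (s := A), Finset.gcd_image]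
      rfl
    rw [Fintype.card_coe, hgcd] at e2
    exact ⟨e1.symm.trans e2⟩

open Complex in
/-- The quotient `ℤ[A∪A₀]/𝓑(A)` is isomorphic to `ℤ^A/ℤ·c_A`, and hence to
`ℤ^{|A|−1} ⊕ ℤ/d_Aℤ`, where `c_A = (c_j)_{j∈A}` are cyclotomic coefficients and
`d_A = gcd{c_j : j ∈ A}` (with `d_A = 0` if all these vanish). -/
theorem stmt14 (n : ℕ) [NeZero n] (hn : 1 < n) (hsf : Squarefree n)
    (A : Finset ℕ) (hA : A ⊆ Finset.range (Nat.totient n + 1)) (hAne : A.Nonempty)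
    (B : AddSubgroup (↥(A ∪ Finset.Ico (Nat.totient n + 1) n) → ℤ))
    (hB : (B : Set (↥(A ∪ Finset.Ico (Nat.totient n + 1) n) → ℤ)) =
      {x | ∃ f : ZMod n → ℤ,
        (∑ v : ZMod n, (f v : ℂ) * Complex.exp (2 * Real.pi * I / n) ^ (v.val) = 0) ∧
        ∀ s : ↥(A ∪ Finset.Ico (Nat.totient n + 1) n), x s = f (((s : ℕ) : ZMod n))}) :
    Nonempty (((↥(A ∪ Finset.Ico (Nat.totient n + 1) n) → ℤ) ⧸ B) ≃+
      ((↥A → ℤ) ⧸ AddSubgroup.zmultiples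
        (fun j : ↥A => (Polynomial.cyclotomic n ℤ).coeff (j : ℕ)))) ∧
    Nonempty (((↥(A ∪ Finset.Ico (Nat.totient n + 1) n) → ℤ) ⧸ B) ≃+
      ((Fin (A.card - 1) → ℤ) ×
        ZMod (A.gcd fun j => (Polynomial.cyclotomic n ℤ).coeff j).toNat)) := by
  have hnpos : 0 < n := by omega
  have htot : Nat.totient n < n := Nat.totient_lt n hn
  have hSlt : ∀ s : ↥(A ∪ Finset.Ico (Nat.totient n + 1) n), (s : ℕ) < n := by
    rintro ⟨s, hs⟩
    show s < n
    rcases Finset.mem_union.mp hs with h | h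
    · have := Finset.mem_range.mp (hA h); omega
    · exact (Finset.mem_Ico.mp h).2
  refine core n hn A hA hAne B fun x => ?_
  have hx : x ∈ B ↔ x ∈ (B : Set _) := Iff.rfl
  rw [hx, hB, Set.mem_setOf_eq]
  constructor
  · rintro ⟨f, hf0, hfs⟩
    obtain ⟨Q, hQ1, hQ2, hQ3⟩ := poly_of_f n hnpos f hf0
    exact ⟨Q, hQ1, hQ2, fun s => by rw [hfs s, hQ3 _ (hSlt s)]⟩
  · rintro ⟨Q, hQ1, hQ2, hQ3⟩
    refine ⟨fun v => Q.coeff v.val, f_of_poly n hnpos Q hQ1 hQ2, fun s => ?_⟩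
    show x s = Q.coeff (((s : ℕ) : ZMod n)).val
    rw [hQ3 s, ZMod.val_cast_of_lt (hSlt s)]
end

section
/- Let G₀,…,G_k be finite abelian groups and G = G₀ × ⋯ × G_k. Define d: ⊕_{i=0}^k ℤ[L_i] → ℤ[G] (where L_i = ∏_{j≠i} G_j) by dψ(g₀,…,g_k) = ∑_i (−1)^i ψ_i(g₀,…,ĝ_i,…,g_k). Then the image of d equals {f ∈ ℤ[G] : 𝓕(f)(χ) = 0 for all χ ∈ Ĝ⁺}, where Ĝ⁺ is the set of characters of G with all components nontrivial. -/
open Finset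

universe u


private lemma char_sum_zero {H : Type*} [CommGroup H] [Fintype H] (χ : H →* ℂˣ) (hχ : χ ≠ 1) :
    ∑ t : H, (χ t : ℂ) = 0 := by
  obtain ⟨a, ha⟩ : ∃ a, χ a ≠ 1 := by
    by_contra h
    push_neg at h
    exact hχ (MonoidHom.ext fun x => h x)
  have key : (χ a : ℂ) * ∑ t : H, (χ t : ℂ) = ∑ t : H, (χ t : ℂ) := by
    rw [Finset.mul_sum]
    exact Fintype.sum_equiv (Equiv.mulLeft a) _ _ (fun t => by
      simp [Equiv.mulLeft, map_mul])
  have h2 : ((χ a : ℂ) - 1) * ∑ t : H, (χ t : ℂ) = 0 := by linear_combination key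
  rcases mul_eq_zero.mp h2 with h | h
  · exact absurd (Units.ext (by simpa using sub_eq_zero.mp h)) ha
  · exact h

private lemma const_of_ft {H : Type*} [CommGroup H] [Fintype H] (v : H → ℂ)
    (hv : ∀ χ : H →* ℂˣ, χ ≠ 1 → ∑ t : H, v t * (χ t : ℂ) = 0) (a b : H) : v a = v b := by
  classical
  set B := AddChar.complexBasis (Additive H) with hB
  set c := B.repr v with hc
  have hrepr : ∀ t : H, v t = ∑ ψ : AddChar (Additive H) ℂ, c ψ * ψ (Additive.ofMul t) := by
    intro t
    have h1 := congr_fun (B.sum_repr v) (Additive.ofMul t)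
    simp only [Finset.sum_apply, Pi.smul_apply, smul_eq_mul, hB, AddChar.complexBasis_apply] at h1
    exact h1.symm
  have hcoef : ∀ ψ : AddChar (Additive H) ℂ, ψ ≠ 0 → c ψ = 0 := by
    intro ψ hψ
    set φ : AddChar (Additive H) ℂ := -ψ with hφ
    have hφ0 : φ ≠ 0 := by simpa [hφ, neg_eq_zero] using hψ
    set χ : H →* ℂˣ :=
      MonoidHom.toHomUnits (φ.toMonoidHom.comp
        (MulEquiv.multiplicativeAdditive H).symm.toMonoidHom) with hχdef
    have hχval : ∀ t : H, (χ t : ℂ) = φ (Additive.ofMul t) := fun t => rfl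
    have hχ1 : χ ≠ 1 := by
      intro h
      apply hφ0
      ext t
      have := congrArg (fun ξ => ((ξ (Additive.toMul t) : ℂˣ) : ℂ)) h
      simpa [hχval] using this
    have h0 := hv χ hχ1
    have hsum : ∑ t : H, v t * (χ t : ℂ) = c ψ * (Fintype.card H : ℂ) := by
      calc ∑ t : H, v t * (χ t : ℂ)
          = ∑ t : H, ∑ ξ : AddChar (Additive H) ℂ,
              c ξ * (ξ (Additive.ofMul t) * φ (Additive.ofMul t)) := by
            refine Finset.sum_congr rfl fun t _ => ?_
            rw [hχval t, hrepr t, Finset.sum_mul]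
            exact Finset.sum_congr rfl fun ξ _ => mul_assoc _ _ _
        _ = ∑ ξ : AddChar (Additive H) ℂ, c ξ *
              ∑ t : H, ξ (Additive.ofMul t) * φ (Additive.ofMul t) := by
            rw [Finset.sum_comm]
            exact Finset.sum_congr rfl fun ξ _ => (Finset.mul_sum _ _ _).symm
        _ = ∑ ξ : AddChar (Additive H) ℂ, c ξ * ∑ s : Additive H, (ξ + φ) s := by
            refine Finset.sum_congr rfl fun ξ _ => ?_
            congr 1
            exact Fintype.sum_equiv Additive.ofMul _ _
              (fun t => (AddChar.add_apply ξ φ (Additive.ofMul t)).symm)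
        _ = c ψ * (Fintype.card H : ℂ) := by
            rw [Finset.sum_eq_single ψ]
            · rw [AddChar.sum_eq_ite]
              have : ψ + φ = 0 := by simp [hφ]
              simp [this]
            · intro ξ _ hne
              rw [AddChar.sum_eq_ite]
              have hne0 : ξ + φ ≠ 0 := by
                intro h
                exact hne (by simpa [hφ] using add_eq_zero_iff_eq_neg.mp h)
              simp [hne0]
            · intro h
              exact absurd (Finset.mem_univ ψ) h
    rw [h0] at hsum
    have hcard : (Fintype.card H : ℂ) ≠ 0 := Nat.cast_ne_zero.2 Fintype.card_ne_zero
    exact (mul_eq_zero.mp hsum.symm).resolve_right hcard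
  have hval : ∀ t : H, v t = c 0 := by
    intro t
    rw [hrepr t, Finset.sum_eq_single 0]
    · simp
    · intro ξ _ hne
      simp [hcoef ξ hne]
    · intro h
      exact absurd (Finset.mem_univ 0) h
  rw [hval a, hval b]

private lemma key_ind (n : ℕ) :
    ∀ (G : Fin (n+1) → Type u) [∀ i, CommGroup (G i)] [∀ i, Fintype (G i)]
      (f : (∀ i, G i) → ℤ),
    (∀ χ : ∀ i, G i →* ℂˣ, (∀ i, χ i ≠ 1) →
        ∑ x : ∀ i, G i, (f x : ℂ) * ∏ i, ((χ i) (x i) : ℂ) = 0) →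
    ∃ h : Fin (n+1) → ((∀ i, G i) → ℤ),
      (∀ i x y, (∀ j, j ≠ i → x j = y j) → h i x = h i y) ∧ ∀ x, f x = ∑ i, h i x := by
  induction n with
  | zero =>
    intro G _ _ f hf
    refine ⟨fun _ _ => f 1, fun i x y _ => rfl, fun x => ?_⟩
    rw [Fin.sum_univ_one]
    have hconst : (f x : ℂ) = (f 1 : ℂ) := by
      refine const_of_ft (fun z => (f z : ℂ)) ?_ x 1
      intro Χ hΧ
      have hx : ∀ z : ∀ i, G i, Pi.mulSingle 0 (z 0) = z := by
        intro z
        funext i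
        have : i = 0 := Fin.ext (by omega)
        subst this
        simp
      set χ : ∀ i, G i →* ℂˣ := fun i => Χ.comp (MonoidHom.mulSingle G i) with hχ
      have hχne : ∀ i, χ i ≠ 1 := by
        intro i h
        have : i = 0 := Fin.ext (by omega)
        subst this
        apply hΧ
        refine MonoidHom.ext fun z => ?_
        have h2 := congrArg (fun ξ => ξ (z 0)) h
        simp only [hχ, MonoidHom.comp_apply, MonoidHom.mulSingle_apply, MonoidHom.one_apply] at h2
        rw [hx z] at h2
        simpa using h2
      have h0 := hf χ hχne
      have : ∀ z : ∀ i, G i, ∏ i, ((χ i) (z i) : ℂ) = (Χ z : ℂ) := by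
        intro z
        rw [Fin.prod_univ_one]
        simp [hχ, hx z]
      simp_rw [this] at h0
      exact h0
    exact_mod_cast hconst
  | succ n ih =>
    intro G _ _ f hf
    classical
    have hsplit : ∀ (F : (∀ i : Fin (n+2), G i) → ℂ),
        ∑ x : ∀ i, G i, F x
          = ∑ s : G 0, ∑ y : ∀ i : Fin (n+1), G i.succ, F (Fin.cons s y) := by
      intro F
      rw [← Equiv.sum_comp (Fin.consEquiv G) F, Fintype.sum_prod_type]
      simp [Fin.consEquiv]
    have hu : ∀ (χ' : ∀ i : Fin (n+1), G i.succ →* ℂˣ), (∀ i, χ' i ≠ 1) →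
        ∀ t : G 0,
        (∑ y : ∀ i : Fin (n+1), G i.succ,
            (f (Fin.cons t y) : ℂ) * ∏ i, ((χ' i) (y i) : ℂ))
          = ∑ y : ∀ i : Fin (n+1), G i.succ,
            (f (Fin.cons (1 : G 0) y) : ℂ) * ∏ i, ((χ' i) (y i) : ℂ) := by
      intro χ' hχ' t
      refine const_of_ft (fun s => ∑ y : ∀ i : Fin (n+1), G i.succ,
        (f (Fin.cons s y) : ℂ) * ∏ i, ((χ' i) (y i) : ℂ)) ?_ t 1
      intro χ₀ h0
      have hχ : ∀ i, Fin.cons (α := fun i => G i →* ℂˣ) χ₀ χ' i ≠ 1 := by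
        intro i
        refine Fin.cases ?_ ?_ i
        · simpa using h0
        · intro j; simpa using hχ' j
      have hmain := hf (Fin.cons χ₀ χ') hχ
      rw [hsplit] at hmain
      rw [← hmain]
      refine Finset.sum_congr rfl fun s _ => ?_
      rw [Finset.sum_mul]
      refine Finset.sum_congr rfl fun y _ => ?_
      conv_rhs => rw [Fin.prod_univ_succ]
      simp only [Fin.cons_zero, Fin.cons_succ]
      ring
    have hIH : ∀ t : G 0, ∃ h : Fin (n+1) → ((∀ i : Fin (n+1), G i.succ) → ℤ),
        (∀ i x y, (∀ j, j ≠ i → x j = y j) → h i x = h i y) ∧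
        ∀ y, f (Fin.cons t y) - f (Fin.cons 1 y) = ∑ i, h i y := by
      intro t
      refine ih (fun i => G i.succ) (fun y => f (Fin.cons t y) - f (Fin.cons 1 y)) ?_
      intro χ' hχ'
      have hut := hu χ' hχ' t
      push_cast
      simp_rw [sub_mul]
      rw [Finset.sum_sub_distrib, hut, sub_self]
    choose h hind heq using hIH
    refine ⟨Fin.cons (fun x => f (Fin.cons 1 (Fin.tail x)))
      (fun i x => h (x 0) i (Fin.tail x)), ?_, ?_⟩
    · intro i
      refine Fin.cases ?_ ?_ i
      · intro x y hxy
        simp only [Fin.cons_zero]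
        have : Fin.tail x = Fin.tail y := by
          funext j
          exact hxy j.succ (Fin.succ_ne_zero j)
        rw [this]
      · intro i x y hxy
        simp only [Fin.cons_succ]
        have h00 : x 0 = y 0 := hxy 0 (Fin.succ_ne_zero i).symm
        rw [h00]
        refine hind (y 0) i _ _ ?_
        intro j hj
        exact hxy j.succ (fun hh => hj (Fin.succ_injective _ hh))
    · intro x
      rw [Fin.sum_univ_succ]
      simp only [Fin.cons_zero, Fin.cons_succ]
      have hx := heq (x 0) (Fin.tail x)
      rw [Fin.cons_self_tail] at hx
      linarith [hx]

private lemma prod_split {k : ℕ} {M : Type*} [CommMonoid M] (i : Fin (k+1)) (g : Fin (k+1) → M) :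
    ∏ j, g j = g i * ∏ j : {j : Fin (k+1) // j ≠ i}, g j.1 := by
  rw [← Finset.mul_prod_erase Finset.univ g (Finset.mem_univ i)]
  congr 1
  exact Finset.prod_subtype (Finset.univ.erase i) (by simp) fun j => g j

/-- Characterization of integral `k`-coboundaries: `f : G₀ × ⋯ × G_k → ℤ` is in the
image of the signed-sum coboundary map `d` iff its Fourier transform vanishes on every
character of the product with all components nontrivial. -/
theorem stmt17 (k : ℕ) (G : Fin (k+1) → Type*) [∀ i, CommGroup (G i)] [∀ i, Fintype (G i)]
    (f : (∀ i, G i) → ℤ) :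
    (∃ ψ : ∀ i : Fin (k+1), (∀ j : {j : Fin (k+1) // j ≠ i}, G j.1) → ℤ,
        f = fun x => ∑ i : Fin (k+1), (-1:ℤ)^(i:ℕ) * ψ i (fun j => x j.1)) ↔
    ∀ χ : ∀ i, G i →* ℂˣ, (∀ i, χ i ≠ 1) →
      ∑ x : ∀ i, G i, (f x : ℂ) * ∏ i, (χ i (x i) : ℂ) = 0 := by
  classical
  constructor
  · rintro ⟨ψ, rfl⟩ χ hχ
    push_cast
    simp_rw [Finset.sum_mul]
    rw [Finset.sum_comm]
    refine Finset.sum_eq_zero fun i _ => ?_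
    rw [← Equiv.sum_comp (Equiv.piSplitAt i G).symm
      (fun x => (-1:ℂ)^(i:ℕ) * (ψ i (fun j => x j.1) : ℂ) * ∏ j, (χ j (x j) : ℂ)),
      Fintype.sum_prod_type]
    have hbj : ∀ (a : G i) (b : ∀ j : {j : Fin (k+1) // j ≠ i}, G j.1)
        (j : {j : Fin (k+1) // j ≠ i}),
        (Equiv.piSplitAt i G).symm (a, b) j.1 = b j := by
      intro a b j
      simp only [Equiv.piSplitAt_symm_apply, dif_neg j.2]
    have ha : ∀ (a : G i) (b : ∀ j : {j : Fin (k+1) // j ≠ i}, G j.1),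
        (Equiv.piSplitAt i G).symm (a, b) i = a := by
      intro a b
      simp
    have hstep : ∀ (a : G i) (b : ∀ j : {j : Fin (k+1) // j ≠ i}, G j.1),
        (-1:ℂ)^(i:ℕ) * (ψ i (fun j => (Equiv.piSplitAt i G).symm (a, b) j.1) : ℂ)
            * ∏ j, (χ j ((Equiv.piSplitAt i G).symm (a, b) j) : ℂ)
          = (χ i a : ℂ) * ((-1:ℂ)^(i:ℕ) * (ψ i b : ℂ)
            * ∏ j : {j : Fin (k+1) // j ≠ i}, (χ j.1 (b j) : ℂ)) := by
      intro a b
      have hb : (fun j : {j : Fin (k+1) // j ≠ i} =>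
          (Equiv.piSplitAt i G).symm (a, b) j.1) = b := funext (hbj a b)
      rw [hb, prod_split i, ha a b]
      rw [Finset.prod_congr rfl fun j _ => by rw [hbj a b j]]
      ring
    calc ∑ a : G i, ∑ b : ∀ j : {j : Fin (k+1) // j ≠ i}, G j.1,
          (-1:ℂ)^(i:ℕ) * (ψ i (fun j => (Equiv.piSplitAt i G).symm (a, b) j.1) : ℂ)
            * ∏ j, (χ j ((Equiv.piSplitAt i G).symm (a, b) j) : ℂ)
        = ∑ a : G i, ∑ b : ∀ j : {j : Fin (k+1) // j ≠ i}, G j.1,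
            (χ i a : ℂ) * ((-1:ℂ)^(i:ℕ) * (ψ i b : ℂ)
              * ∏ j : {j : Fin (k+1) // j ≠ i}, (χ j.1 (b j) : ℂ)) :=
          Finset.sum_congr rfl fun a _ => Finset.sum_congr rfl fun b _ => hstep a b
      _ = (∑ a : G i, (χ i a : ℂ)) * ∑ b : ∀ j : {j : Fin (k+1) // j ≠ i}, G j.1,
            (-1:ℂ)^(i:ℕ) * (ψ i b : ℂ)
              * ∏ j : {j : Fin (k+1) // j ≠ i}, (χ j.1 (b j) : ℂ) :=
          (Finset.sum_mul_sum _ _ _ _).symm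
      _ = 0 := by rw [char_sum_zero (χ i) (hχ i), zero_mul]
  · intro hf
    obtain ⟨h, hind, heq⟩ := key_ind k G f hf
    refine ⟨fun i b => (-1:ℤ)^(i:ℕ) *
      h i (fun j => if hj : j = i then hj.symm.rec (1 : G i) else b ⟨j, hj⟩), ?_⟩
    funext x
    rw [heq x]
    refine Finset.sum_congr rfl fun i _ => ?_
    have hsq : (-1:ℤ)^(i:ℕ) * (-1:ℤ)^(i:ℕ) = 1 := by
      rw [← pow_add]
      exact Even.neg_one_pow ⟨(i:ℕ), rfl⟩
    rw [← mul_assoc, hsq, one_mul]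
    refine hind i _ _ fun j hj => ?_
    simp only [dif_neg hj]
end

section
/- Let G₀,…,G_k be finite abelian groups, G their product, and d the signed sum map from ⊕_i ℤ[∏_{j≠i} G_j] to ℤ[G] as in simplicial cochain complexes. Then the cokernel ℤ[G]/im(d) is a free abelian group of rank ∏_{i=0}^{k}(|G_i| − 1). -/
open Finset

section Aux

variable {k : ℕ} {G : Fin (k+1) → Type*} [∀ i, CommGroup (G i)]

/-- Replace the coordinates in `S` by `1`. -/
def rrep (S : Finset (Fin (k+1))) (x : ∀ i, G i) : ∀ i, G i :=
  fun i => if i ∈ S then 1 else x i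

lemma rrep_empty (x : ∀ i, G i) : rrep (G := G) ∅ x = x := by
  funext i; simp [rrep]

private lemma sign_cancel (a : ℤ) (m : ℕ) : (-1:ℤ)^(m+1) * a + (-1:ℤ)^m * a = 0 := by
  ring

/-- Involution lemma: if `g ∘ rrep · x` is insensitive to inserting `i₀`, the signed
sum over all subsets vanishes. -/
lemma sum_rrep_eq_zero (g : (∀ i, G i) → ℤ) (x : ∀ i, G i) (i₀ : Fin (k+1))
    (h : ∀ S : Finset (Fin (k+1)), i₀ ∉ S →
      g (rrep (insert i₀ S) x) = g (rrep S x)) :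
    ∑ S : Finset (Fin (k+1)), (-1:ℤ)^S.card * g (rrep S x) = 0 := by
  set F : Finset (Fin (k+1)) → ℤ := fun S => (-1:ℤ)^S.card * g (rrep S x) with hF
  set inv : ∀ S : Finset (Fin (k+1)), S ∈ (univ : Finset (Finset (Fin (k+1)))) →
      Finset (Fin (k+1)) :=
    fun S _ => if i₀ ∈ S then S.erase i₀ else insert i₀ S with hinv
  have hadd : ∀ S (hS : S ∈ univ), F S + F (inv S hS) = 0 := by
    intro S _
    by_cases hS : i₀ ∈ S
    · simp only [hinv, hS, if_true, hF]
      have h1 : insert i₀ (S.erase i₀) = S := Finset.insert_erase hS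
      have h2 := h (S.erase i₀) (Finset.notMem_erase _ _)
      rw [h1] at h2
      rw [h2, Finset.card_erase_of_mem hS]
      have hc : S.card = (S.card - 1) + 1 :=
        (Nat.succ_pred_eq_of_pos (Finset.card_pos.2 ⟨i₀, hS⟩)).symm
      rw [hc]
      simpa using sign_cancel (g (rrep (S.erase i₀) x)) (S.card - 1)
    · simp only [hinv, hS, if_false, hF]
      rw [h S hS, Finset.card_insert_of_notMem hS, add_comm]
      exact sign_cancel (g (rrep S x)) S.card
  have hne : ∀ S (hS : S ∈ univ), F S ≠ 0 → inv S hS ≠ S := by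
    intro S _ _
    by_cases hS : i₀ ∈ S
    · simp only [hinv, hS, if_true]
      intro hc
      rw [Finset.erase_eq_self] at hc
      exact hc hS
    · simp only [hinv, hS, if_false]
      intro hc
      rw [Finset.insert_eq_self] at hc
      exact hS hc
  have hmem : ∀ S (hS : S ∈ univ), inv S hS ∈ (univ : Finset (Finset (Fin (k+1)))) :=
    fun S _ => Finset.mem_univ _
  have hinvinv : ∀ S (hS : S ∈ univ), inv (inv S hS) (hmem S hS) = S := by
    intro S _
    by_cases hS : i₀ ∈ S
    · simp only [hinv, hS, if_true, Finset.notMem_erase, if_false]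
      exact Finset.insert_erase hS
    · simp only [hinv, hS, if_false, Finset.mem_insert_self, if_true]
      exact Finset.erase_insert hS
  exact Finset.sum_involution inv hadd hne hmem hinvinv

/-- The full multidifference operator on functions. -/
def Phi' : ((∀ i, G i) → ℤ) →ₗ[ℤ] ((∀ i, G i) → ℤ) where
  toFun f := fun x => ∑ S : Finset (Fin (k+1)), (-1:ℤ)^S.card * f (rrep S x)
  map_add' f g := by
    funext x
    simp [mul_add, Finset.sum_add_distrib]
  map_smul' c f := by
    funext x
    simp [Finset.mul_sum, mul_left_comm]

/-- If some coordinate of `x` equals `1`, then `Phi' f x = 0`. -/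
lemma Phi'_eq_zero_of_coord_one (f : (∀ i, G i) → ℤ) (x : ∀ i, G i) (i₀ : Fin (k+1))
    (hx : x i₀ = 1) : Phi' f x = 0 := by
  apply sum_rrep_eq_zero f x i₀
  intro S hS
  congr 1
  funext j
  by_cases hj : j = i₀
  · subst hj
    simp [rrep, hS, hx]
  · simp [rrep, Finset.mem_insert, hj]

end Aux

/-- The cokernel of the coboundary map `d : ⊕ᵢ ℤ[∏_{j≠i} G_j] → ℤ[G₀ × ⋯ × G_k]` is a
free abelian group of rank `∏ᵢ(|G_i| − 1)`. -/
theorem stmt18 (k : ℕ) (G : Fin (k+1) → Type*) [∀ i, CommGroup (G i)] [∀ i, Fintype (G i)]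
    (U : Submodule ℤ ((∀ i, G i) → ℤ))
    (hU : (U : Set ((∀ i, G i) → ℤ)) = Set.range
      (fun (ψ : ∀ i : Fin (k+1), (∀ j : {j : Fin (k+1) // j ≠ i}, G j.1) → ℤ)
        (x : ∀ i, G i) => ∑ i : Fin (k+1), (-1:ℤ)^(i:ℕ) * ψ i (fun j => x j.1))) :
    Nonempty ((((∀ i, G i) → ℤ) ⧸ U) ≃ₗ[ℤ]
      (Fin (∏ i, (Fintype.card (G i) - 1)) → ℤ)) := by
  classical
  set n := ∏ i, (Fintype.card (G i) - 1) with hn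
  set G' := ∀ i, {g : G i // g ≠ 1} with hG'
  set ι : G' → (∀ i, G i) := fun x i => (x i : G i) with hι
  set Φ : ((∀ i, G i) → ℤ) →ₗ[ℤ] (G' → ℤ) := (LinearMap.funLeft ℤ ℤ ι).comp Phi' with hΦ
  -- `Φ f = 0` iff `Phi' f = 0` everywhere
  have hΦapp : ∀ (f : (∀ i, G i) → ℤ) (x : G'), Φ f x = Phi' f (ι x) := fun f x => rfl
  have hzero : ∀ f : (∀ i, G i) → ℤ, Φ f = 0 → ∀ x, Phi' f x = 0 := by
    intro f hf x
    by_cases hx : ∀ i, x i ≠ 1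
    · have : x = ι (fun i => ⟨x i, hx i⟩) := by funext i; rfl
      rw [this, ← hΦapp, hf]; rfl
    · push_neg at hx
      obtain ⟨i₀, hi₀⟩ := hx
      exact Phi'_eq_zero_of_coord_one f x i₀ hi₀
  -- extension of a partial point by 1 at coordinate i
  set ext : ∀ i : Fin (k+1), (∀ j : {j : Fin (k+1) // j ≠ i}, G j.1) → (∀ j, G j) :=
    fun i y j => if h : j = i then 1 else y ⟨j, h⟩ with hext
  set idx : Finset (Fin (k+1)) → Fin (k+1) :=
    fun S => if h : S.Nonempty then S.min' h else 0 with hidx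
  have hker : LinearMap.ker Φ = U := by
    ext f
    rw [LinearMap.mem_ker]
    constructor
    · intro hf
      have hf' := hzero f hf
      have hmem : f ∈ (U : Set ((∀ i, G i) → ℤ)) := by
        rw [hU]
        refine ⟨fun i y => (-1:ℤ)^(i:ℕ) *
          ∑ S ∈ (univ.filter (fun S : Finset (Fin (k+1)) => S.Nonempty)).filter
            (fun S => idx S = i), (-1:ℤ)^(S.card+1) * f (rrep S (ext i y)), ?_⟩
        funext x
        have hsq : ∀ (i : Fin (k+1)) (a : ℤ), (-1:ℤ)^(i:ℕ) * ((-1:ℤ)^(i:ℕ) * a) = a := by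
          intro i a
          rw [← mul_assoc, ← pow_add]
          rw [Even.neg_one_pow ⟨(i:ℕ), rfl⟩, one_mul]
        calc (∑ i : Fin (k+1), (-1:ℤ)^(i:ℕ) * ((-1:ℤ)^(i:ℕ) *
              ∑ S ∈ (univ.filter (fun S : Finset (Fin (k+1)) => S.Nonempty)).filter
                (fun S => idx S = i), (-1:ℤ)^(S.card+1) * f (rrep S (ext i (fun j => x j.1)))))
            = ∑ i : Fin (k+1),
              ∑ S ∈ (univ.filter (fun S : Finset (Fin (k+1)) => S.Nonempty)).filter
                (fun S => idx S = i), (-1:ℤ)^(S.card+1) * f (rrep S x) := by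
              refine Finset.sum_congr rfl fun i _ => ?_
              rw [hsq]
              refine Finset.sum_congr rfl fun S hS => ?_
              simp only [Finset.mem_filter, Finset.mem_univ, true_and] at hS
              obtain ⟨hSne, hSidx⟩ := hS
              have hiS : i ∈ S := by
                rw [← hSidx, hidx]
                simp only [hSne, dif_pos]
                exact S.min'_mem hSne
              congr 2
              funext j
              by_cases hj : j ∈ S
              · simp [rrep, hj]
              · have hji : j ≠ i := fun h => hj (h ▸ hiS)
                simp [rrep, hj, hext, hji]
          _ = ∑ S ∈ univ.filter (fun S : Finset (Fin (k+1)) => S.Nonempty),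
                (-1:ℤ)^(S.card+1) * f (rrep S x) :=
              Finset.sum_fiberwise _ idx _
          _ = f x := by
              have h0 := hf' x
              rw [show (Phi' f x) = ∑ S : Finset (Fin (k+1)), (-1:ℤ)^S.card * f (rrep S x)
                from rfl] at h0
              have hsplit : (∅ : Finset (Fin (k+1))) ∈
                  (univ : Finset (Finset (Fin (k+1)))) := Finset.mem_univ _
              rw [← Finset.add_sum_erase _ _ hsplit] at h0
              simp only [Finset.card_empty, pow_zero, one_mul, rrep_empty] at h0
              have hee : univ.filter (fun S : Finset (Fin (k+1)) => S.Nonempty)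
                  = (univ : Finset (Finset (Fin (k+1)))).erase ∅ := by
                ext S
                simp [Finset.nonempty_iff_ne_empty]
              rw [hee]
              have : ∑ S ∈ (univ : Finset (Finset (Fin (k+1)))).erase ∅,
                  (-1:ℤ)^(S.card+1) * f (rrep S x)
                  = - ∑ S ∈ (univ : Finset (Finset (Fin (k+1)))).erase ∅,
                  (-1:ℤ)^(S.card) * f (rrep S x) := by
                rw [← Finset.sum_neg_distrib]
                refine Finset.sum_congr rfl fun S _ => ?_
                ring
              rw [this]
              linarith
      exact hmem
    · intro hf
      have hmem : f ∈ (U : Set ((∀ i, G i) → ℤ)) := hf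
      rw [hU] at hmem
      obtain ⟨ψ, hψ⟩ := hmem
      funext x
      rw [hΦapp]
      show Phi' f (ι x) = 0
      generalize ι x = z
      rw [show (Phi' f z) = ∑ S : Finset (Fin (k+1)), (-1:ℤ)^S.card * f (rrep S z)
        from rfl]
      have hfr : ∀ y, f y = ∑ i : Fin (k+1), (-1:ℤ)^(i:ℕ) * ψ i (fun j => y j.1) := by
        intro y; rw [← hψ]
      calc ∑ S : Finset (Fin (k+1)), (-1:ℤ)^S.card * f (rrep S z)
          = ∑ S : Finset (Fin (k+1)), ∑ i : Fin (k+1),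
              (-1:ℤ)^S.card * ((-1:ℤ)^(i:ℕ) * ψ i (fun j => (rrep S z) j.1)) := by
            refine Finset.sum_congr rfl fun S _ => ?_
            rw [hfr, Finset.mul_sum]
        _ = ∑ i : Fin (k+1), ∑ S : Finset (Fin (k+1)),
              (-1:ℤ)^S.card * ((fun w => (-1:ℤ)^(i:ℕ) * ψ i (fun j => w j.1)) (rrep S z)) :=
            Finset.sum_comm
        _ = 0 := by
            refine Finset.sum_eq_zero fun i _ => ?_
            refine sum_rrep_eq_zero (fun w => (-1:ℤ)^(i:ℕ) * ψ i fun j => w j.1) z i ?_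
            intro S hS
            show (-1:ℤ)^(i:ℕ) * ψ i (fun j => rrep (insert i S) z j.1)
              = (-1:ℤ)^(i:ℕ) * ψ i (fun j => rrep S z j.1)
            congr 2
            funext j
            have hji : (j : Fin (k+1)) ≠ i := j.2
            simp [rrep, Finset.mem_insert, hji]
  have hsurj : Function.Surjective Φ := by
    intro h
    refine ⟨fun x => if H : ∀ i, x i ≠ 1 then h (fun i => ⟨x i, H i⟩) else 0, ?_⟩
    funext x
    rw [hΦapp]
    show (∑ S : Finset (Fin (k+1)), (-1:ℤ)^S.card *
      (fun y => if H : ∀ i, y i ≠ 1 then h (fun i => ⟨y i, H i⟩) else 0) (rrep S (ι x))) = h x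
    rw [Finset.sum_eq_single (∅ : Finset (Fin (k+1)))]
    · simp only [Finset.card_empty, pow_zero, one_mul, rrep_empty]
      have H : ∀ i, ι x i ≠ 1 := fun i => (x i).2
      simp only [dif_pos H]
      rfl
    · intro S _ hSne
      obtain ⟨i₀, hi₀⟩ := Finset.nonempty_iff_ne_empty.2 hSne
      have : ¬ ∀ i, rrep S (ι x) i ≠ 1 := by
        intro hc
        exact hc i₀ (by simp [rrep, hi₀])
      simp only [dif_neg this, mul_zero]
    · intro hc
      exact absurd (Finset.mem_univ _) hc
  have ecard : Fintype.card G' = n := by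
    show Fintype.card (∀ i, {g : G i // g ≠ 1}) = n
    rw [Fintype.card_pi, hn]
    refine Finset.prod_congr rfl fun i _ => ?_
    simp [Fintype.card_subtype_compl]
  have e1 : (((∀ i, G i) → ℤ) ⧸ U) ≃ₗ[ℤ] (G' → ℤ) :=
    (Submodule.quotEquivOfEq U (LinearMap.ker Φ) hker.symm).trans
      (Φ.quotKerEquivOfSurjective hsurj)
  have e2 : (G' → ℤ) ≃ₗ[ℤ] (Fin n → ℤ) :=
    LinearEquiv.funCongrLeft ℤ ℤ (Fintype.equivFinOfCardEq ecard).symm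
  exact ⟨e1.trans e2⟩
end

section
/- Let n > 1 be squarefree, Φ_n = ∑_{j=0}^{φ(n)} c_j z^j, and j ∈ {0,…,φ(n)}. With A = {j}, A₀ = {φ(n)+1,…,n−1}, ω = e^{2πi/n}, and 𝓑({j}) = {f restricted to A∪A₀ : f: ℤ/n → ℤ, ∑_x f(x)ω^x = 0}, the quotient ℤ[A∪A₀]/𝓑({j}) is isomorphic to ℤ/c_jℤ. -/
open Polynomial Finset

namespace Stmt19Aux

/-- The pairing `⟨A,B⟩ = ∑_{s<n} A_s B_s`. -/
noncomputable def pair (n : ℕ) (A B : Polynomial ℤ) : ℤ :=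
  ∑ s ∈ Finset.range n, A.coeff s * B.coeff s

lemma pair_sub_left (n : ℕ) (A A' B : Polynomial ℤ) :
    pair n (A - A') B = pair n A B - pair n A' B := by
  simp [pair, sub_mul, Finset.sum_sub_distrib]

lemma pair_single_left (n : ℕ) (t : ℤ) (p : ℕ) (hp : p < n) (B : Polynomial ℤ) :
    pair n (C t * X ^ p) B = t * B.coeff p := by
  rw [pair, Finset.sum_eq_single p]
  · simp [coeff_X_pow]
  · intro s _ hs
    simp [coeff_X_pow, hs, coeff_C_mul]
  · intro h; exact absurd (Finset.mem_range.mpr hp) h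

lemma coeff_cyclo_top (n : ℕ) : (cyclotomic n ℤ).coeff n.totient = 1 := by
  have h := (cyclotomic.monic n ℤ).coeff_natDegree
  rwa [natDegree_cyclotomic] at h

lemma coeff_cyclo_zero' (n t : ℕ) (ht : n.totient < t) : (cyclotomic n ℤ).coeff t = 0 := by
  apply coeff_eq_zero_of_natDegree_lt
  rwa [natDegree_cyclotomic]

/-- Existence of the dual vector `W`. -/
lemma W_exists (n j : ℕ) (hn : 1 < n) (hj : j ≤ n.totient) :
    ∀ m, m ≤ n - n.totient - 1 → ∃ W : Polynomial ℤ,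
      W.coeff j = 1 ∧
      (∀ s, s ≠ j → ¬(n.totient + 1 ≤ s ∧ s < n.totient + 1 + m) → W.coeff s = 0) ∧
      (∀ i, 1 ≤ i → i ≤ m → pair n W (X ^ i * cyclotomic n ℤ) = 0) := by
  have hφ : n.totient < n := Nat.totient_lt n hn
  intro m
  induction m with
  | zero =>
      intro _
      refine ⟨X ^ j, by simp [coeff_X_pow], ?_, ?_⟩
      · intro s hs _; simp [coeff_X_pow, hs]
      · intro i hi hi0; omega
  | succ m ih =>
      intro hm
      obtain ⟨W, hWj, hWs, hWp⟩ := ih (by omega)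
      set p := n.totient + 1 + m with hp
      have hpn : p < n := by omega
      have hpj : p ≠ j := by omega
      set t := pair n W (X ^ (m + 1) * cyclotomic n ℤ) with ht
      refine ⟨W - C t * X ^ p, ?_, ?_, ?_⟩
      · rw [coeff_sub, hWj, coeff_C_mul, coeff_X_pow, if_neg (Ne.symm hpj)]; ring
      · intro s hs hrange
        have h1 : W.coeff s = 0 := hWs s hs (by omega)
        have h2 : s ≠ p := by omega
        rw [coeff_sub, h1, coeff_C_mul, coeff_X_pow, if_neg h2]; ring
      · intro i hi him
        rw [pair_sub_left, pair_single_left n t p hpn]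
        have hco : (X ^ i * cyclotomic n ℤ).coeff p = (cyclotomic n ℤ).coeff (p - i) := by
          rw [coeff_X_pow_mul', if_pos (by omega : i ≤ p)]
        rcases Nat.lt_or_ge i (m + 1) with hlt | hge
        · have : (cyclotomic n ℤ).coeff (p - i) = 0 := coeff_cyclo_zero' n _ (by omega)
          rw [hWp i hi (by omega), hco, this]; ring
        · have hieq : i = m + 1 := by omega
          have hpi : p - i = n.totient := by omega
          rw [hco, hpi, coeff_cyclo_top, hieq, ← ht]; ring

/-- Existence of the division polynomial `q` matching prescribed coefficients in the
top window. -/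
lemma Q_exists (n : ℕ) (hn : 1 < n) (x : ℕ → ℤ) :
    ∀ m, m ≤ n - n.totient - 1 → ∃ q : Polynomial ℤ,
      q.coeff 0 = 0 ∧ q.natDegree ≤ n - n.totient - 1 ∧
      ∀ k, n - m ≤ k → k < n → (cyclotomic n ℤ * q).coeff k = x k := by
  have hφ : n.totient < n := Nat.totient_lt n hn
  intro m
  induction m with
  | zero =>
      intro _
      exact ⟨0, by simp, by simp, fun k hk hk' => by omega⟩
  | succ m ih =>
      intro hm
      obtain ⟨q, hq0, hqd, hqw⟩ := ih (by omega)
      set e := n - n.totient - 1 - m with he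
      have he1 : 1 ≤ e := by omega
      set t := x (n - 1 - m) - (cyclotomic n ℤ * q).coeff (n - 1 - m) with htdef
      refine ⟨q + C t * X ^ e, ?_, ?_, ?_⟩
      · rw [coeff_add, hq0, coeff_C_mul, coeff_X_pow, if_neg (by omega)]; ring
      · refine le_trans (natDegree_add_le _ _) (max_le hqd ?_)
        exact le_trans (natDegree_C_mul_X_pow_le t e) (by omega)
      · intro k hk hk'
        have hmul : cyclotomic n ℤ * (q + C t * X ^ e)
            = cyclotomic n ℤ * q + C t * (X ^ e * cyclotomic n ℤ) := by ring
        have hcoX : (X ^ e * cyclotomic n ℤ).coeff k = (cyclotomic n ℤ).coeff (k - e) := by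
          rw [coeff_X_pow_mul', if_pos (by omega : e ≤ k)]
        rw [hmul, coeff_add, coeff_C_mul, hcoX]
        rcases Nat.lt_or_ge (n - 1 - m) k with hlt | hge
        · have hz : (cyclotomic n ℤ).coeff (k - e) = 0 := coeff_cyclo_zero' n _ (by omega)
          rw [hqw k (by omega) hk', hz]; ring
        · have hkeq : k = n - 1 - m := by omega
          have hke2 : k - e = n.totient := by omega
          rw [hke2, coeff_cyclo_top, htdef, hkeq]; ring

lemma pair_sum_right (n : ℕ) (A : Polynomial ℤ) {ι : Type*} (s : Finset ι)
    (f : ι → Polynomial ℤ) :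
    pair n A (∑ i ∈ s, f i) = ∑ i ∈ s, pair n A (f i) := by
  unfold pair
  calc ∑ k ∈ Finset.range n, A.coeff k * (∑ i ∈ s, f i).coeff k
      = ∑ k ∈ Finset.range n, ∑ i ∈ s, A.coeff k * (f i).coeff k := by
        refine Finset.sum_congr rfl fun k _ => ?_
        rw [finset_sum_coeff, Finset.mul_sum]
    _ = ∑ i ∈ s, ∑ k ∈ Finset.range n, A.coeff k * (f i).coeff k := Finset.sum_comm

lemma pair_monomial_right (n : ℕ) (A B : Polynomial ℤ) (a : ℤ) (i : ℕ) :
    pair n A (B * (C a * X ^ i)) = a * pair n A (X ^ i * B) := by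
  have hB : B * (C a * X ^ i) = C a * (X ^ i * B) := by ring
  rw [hB, pair, pair, Finset.mul_sum]
  refine Finset.sum_congr rfl fun k _ => ?_
  rw [coeff_C_mul]; ring

lemma pair_W_cyclo (n j : ℕ) (hn : 1 < n) (hj : j ≤ n.totient) (W : Polynomial ℤ)
    (hWj : W.coeff j = 1)
    (hWs : ∀ s, s ≠ j → ¬(n.totient + 1 ≤ s ∧ s < n) → W.coeff s = 0) :
    pair n W (cyclotomic n ℤ) = (cyclotomic n ℤ).coeff j := by
  have hφ : n.totient < n := Nat.totient_lt n hn
  rw [pair, Finset.sum_eq_single j]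
  · rw [hWj, one_mul]
  · intro s hsr hs
    by_cases h : n.totient + 1 ≤ s ∧ s < n
    · rw [coeff_cyclo_zero' n s (by omega), mul_zero]
    · rw [hWs s hs h, zero_mul]
  · intro h; exact absurd (Finset.mem_range.mpr (by omega)) h

lemma pair_mul_cyclo (n j : ℕ) (hn : 1 < n) (hj : j ≤ n.totient) (W q : Polynomial ℤ)
    (hWj : W.coeff j = 1)
    (hWs : ∀ s, s ≠ j → ¬(n.totient + 1 ≤ s ∧ s < n) → W.coeff s = 0)
    (hWp : ∀ i, 1 ≤ i → i < n - n.totient → pair n W (X ^ i * cyclotomic n ℤ) = 0)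
    (hqd : q.natDegree ≤ n - n.totient - 1) :
    pair n W (cyclotomic n ℤ * q) = q.coeff 0 * (cyclotomic n ℤ).coeff j := by
  have hφ : n.totient < n := Nat.totient_lt n hn
  have hqd' : q.natDegree < n - n.totient := by omega
  conv_lhs => rw [as_sum_range' q (n - n.totient) hqd', Finset.mul_sum]
  rw [pair_sum_right]
  have hterm : ∀ i, pair n W (cyclotomic n ℤ * monomial i (q.coeff i))
      = q.coeff i * pair n W (X ^ i * cyclotomic n ℤ) := by
    intro i
    rw [← C_mul_X_pow_eq_monomial, pair_monomial_right]
  rw [Finset.sum_eq_single 0]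
  · rw [hterm, pow_zero, one_mul, pair_W_cyclo n j hn hj W hWj hWs]
  · intro i hi h0
    rw [hterm, hWp i (by omega) (Finset.mem_range.mp hi), mul_zero]
  · intro h
    exact absurd (Finset.mem_range.mpr (by omega)) h

lemma sum_val (n : ℕ) [NeZero n] (g : Polynomial ℤ) (hg : g.natDegree < n) (z : ℂ) :
    ∑ v : ZMod n, ((g.coeff v.val : ℤ) : ℂ) * z ^ (v.val) = (aeval z) g := by
  rw [aeval_eq_sum_range' hg]
  refine Finset.sum_nbij' (fun v : ZMod n => v.val) (fun k => ((k : ℕ) : ZMod n))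
    ?_ ?_ ?_ ?_ ?_
  · intro v _; exact Finset.mem_range.mpr (ZMod.val_lt v)
  · intro k _; exact Finset.mem_univ _
  · intro v _; exact ZMod.natCast_rightInverse v
  · intro k hk; exact ZMod.val_cast_of_lt (Finset.mem_range.mp hk)
  · intro v _; rw [zsmul_eq_mul]

lemma aeval_cyclo (n : ℕ) (hn : 1 < n) :
    (aeval (Complex.exp (2 * Real.pi * Complex.I / n))) (cyclotomic n ℤ) = 0 := by
  have hprim := Complex.isPrimitiveRoot_exp n (by omega)
  have hroot := hprim.isRoot_cyclotomic (by omega : 0 < n)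
  rw [aeval_def, eval₂_eq_eval_map, map_cyclotomic]
  exact hroot

lemma dvd_of_aeval_zero (n : ℕ) (hn : 1 < n) (P : Polynomial ℤ)
    (hP : (aeval (Complex.exp (2 * Real.pi * Complex.I / n))) P = 0) :
    cyclotomic n ℤ ∣ P := by
  have hprim := Complex.isPrimitiveRoot_exp n (by omega)
  rw [cyclotomic_eq_minpoly hprim (by omega)]
  exact minpoly.isIntegrallyClosed_dvd (hprim.isIntegral (by omega)) hP

def xe (S : Finset ℕ) (x : ↥S → ℤ) (k : ℕ) : ℤ := if h : k ∈ S then x ⟨k, h⟩ else 0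

lemma xe_pos (S : Finset ℕ) (x : ↥S → ℤ) {k : ℕ} (h : k ∈ S) : xe S x k = x ⟨k, h⟩ :=
  dif_pos h

lemma xe_neg (S : Finset ℕ) (x : ↥S → ℤ) {k : ℕ} (h : k ∉ S) : xe S x k = 0 :=
  dif_neg h

lemma xe_add (S : Finset ℕ) (x y : ↥S → ℤ) (k : ℕ) :
    xe S (x + y) k = xe S x k + xe S y k := by
  unfold xe; split <;> simp

lemma xe_zero (S : Finset ℕ) (k : ℕ) : xe S (0 : ↥S → ℤ) k = 0 := by
  unfold xe; split <;> simp

end Stmt19Aux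

open Polynomial Finset Stmt19Aux in
open Complex in
/-- Musiker–Reiner core: for `n > 1` squarefree, `A = {j}` with `j ≤ φ(n)` and
`A₀ = {φ(n)+1,…,n−1}`, the quotient `ℤ[A∪A₀]/𝓑({j})` is isomorphic to `ℤ/c_jℤ`,
where `c_j` is the `j`-th coefficient of the `n`-th cyclotomic polynomial. -/
theorem stmt19 (n : ℕ) [NeZero n] (hn : 1 < n) (hsf : Squarefree n)
    (j : ℕ) (hj : j ≤ Nat.totient n)
    (B : AddSubgroup (↥(({j} : Finset ℕ) ∪ Finset.Ico (Nat.totient n + 1) n) → ℤ))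
    (hB : (B : Set (↥(({j} : Finset ℕ) ∪ Finset.Ico (Nat.totient n + 1) n) → ℤ)) =
      {x | ∃ f : ZMod n → ℤ,
        (∑ v : ZMod n, (f v : ℂ) * Complex.exp (2 * Real.pi * I / n) ^ (v.val) = 0) ∧
        ∀ s : ↥(({j} : Finset ℕ) ∪ Finset.Ico (Nat.totient n + 1) n),
          x s = f (((s : ℕ) : ZMod n))}) :
    Nonempty (((↥(({j} : Finset ℕ) ∪ Finset.Ico (Nat.totient n + 1) n) → ℤ) ⧸ B) ≃+
      ZMod ((Polynomial.cyclotomic n ℤ).coeff j).natAbs) := by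
  classical
  have hφ : Nat.totient n < n := Nat.totient_lt n hn
  have hjn : j < n := lt_of_le_of_lt hj hφ
  revert hB
  revert B
  set S : Finset ℕ := ({j} : Finset ℕ) ∪ Finset.Ico (Nat.totient n + 1) n with hS
  intro B hB
  have hjS : j ∈ S := Finset.mem_union_left _ (Finset.mem_singleton_self j)
  have hmemS : ∀ k, k ∈ S ↔ (k = j ∨ (Nat.totient n + 1 ≤ k ∧ k < n)) := by
    intro k; simp [hS, Finset.mem_union, Finset.mem_Ico]
  have hSn : ∀ k ∈ S, k < n := by
    intro k hk
    rcases (hmemS k).1 hk with rfl | h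
    · exact hjn
    · exact h.2
  obtain ⟨W, hWj, hWs0, hWp0⟩ := Stmt19Aux.W_exists n j hn hj (n - Nat.totient n - 1) le_rfl
  have hWsn : ∀ s, s ≠ j → ¬(Nat.totient n + 1 ≤ s ∧ s < n) → W.coeff s = 0 := by
    intro s h1 h2
    apply hWs0 s h1
    intro hcon
    exact h2 ⟨hcon.1, by omega⟩
  have hWs : ∀ s, s ∉ S → W.coeff s = 0 := by
    intro s hs
    have h1 : s ≠ j := fun h => hs (h ▸ hjS)
    apply hWsn s h1
    intro hcon
    exact hs ((hmemS s).2 (Or.inr hcon))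
  have hWp : ∀ i, 1 ≤ i → i < n - Nat.totient n →
      Stmt19Aux.pair n W (X ^ i * cyclotomic n ℤ) = 0 :=
    fun i h1 h2 => hWp0 i h1 (by omega)
  set N := ((cyclotomic n ℤ).coeff j).natAbs with hN
  have hcast0 : (((cyclotomic n ℤ).coeff j : ℤ) : ZMod N) = 0 := by
    rw [ZMod.intCast_zmod_eq_zero_iff_dvd]
    exact Int.natAbs_dvd.mpr dvd_rfl
  set Λ : (↥S → ℤ) →+ ZMod N :=
    { toFun := fun x => ((∑ k ∈ Finset.range n, W.coeff k * xe S x k : ℤ) : ZMod N)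
      map_zero' := by
        show ((∑ k ∈ Finset.range n, W.coeff k * xe S (0 : ↥S → ℤ) k : ℤ) : ZMod N) = 0
        have : ∀ k, W.coeff k * xe S (0 : ↥S → ℤ) k = 0 := by
          intro k; rw [xe_zero, mul_zero]
        rw [Finset.sum_congr rfl fun k _ => this k]
        simp
      map_add' := by
        intro x y
        show ((∑ k ∈ Finset.range n, W.coeff k * xe S (x + y) k : ℤ) : ZMod N)
          = ((∑ k ∈ Finset.range n, W.coeff k * xe S x k : ℤ) : ZMod N)
            + ((∑ k ∈ Finset.range n, W.coeff k * xe S y k : ℤ) : ZMod N)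
        have : ∑ k ∈ Finset.range n, W.coeff k * xe S (x + y) k
            = (∑ k ∈ Finset.range n, W.coeff k * xe S x k)
              + ∑ k ∈ Finset.range n, W.coeff k * xe S y k := by
          rw [← Finset.sum_add_distrib]
          refine Finset.sum_congr rfl fun k _ => ?_
          rw [xe_add]; ring
        simp only [this]
        push_cast
        ring } with hΛ
  have hΛapp : ∀ x : ↥S → ℤ,
      Λ x = ((∑ k ∈ Finset.range n, W.coeff k * xe S x k : ℤ) : ZMod N) := fun _ => rfl
  have hsurj : Function.Surjective Λ := by
    intro z
    obtain ⟨m, rfl⟩ := ZMod.intCast_surjective z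
    refine ⟨fun s => if (s : ℕ) = j then m else 0, ?_⟩
    rw [hΛapp]
    congr 1
    rw [Finset.sum_eq_single j]
    · rw [xe_pos S _ hjS]
      simp [hWj]
    · intro k _ hk
      by_cases h : k ∈ S
      · rw [xe_pos S _ h]
        simp [hk]
      · rw [xe_neg S _ h, mul_zero]
    · intro h; exact absurd (Finset.mem_range.mpr hjn) h
  have hker : B = Λ.ker := by
    ext x
    rw [AddMonoidHom.mem_ker, hΛapp]
    constructor
    · intro hx
      have hx' : x ∈ (B : Set _) := hx
      rw [hB] at hx'
      obtain ⟨f, hf0, hfs⟩ := hx'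
      set P : Polynomial ℤ := ∑ v : ZMod n, C (f v) * X ^ (v.val) with hP
      have hPdeg : P.natDegree < n := by
        have h1 : P.natDegree ≤ n - 1 := by
          apply natDegree_sum_le_of_forall_le
          intro v _
          refine le_trans (natDegree_C_mul_X_pow_le _ _) ?_
          have := ZMod.val_lt v; omega
        omega
      have hPcoeff : ∀ s, s < n → P.coeff s = f ((s : ZMod n)) := by
        intro s hs
        rw [hP, finset_sum_coeff]
        rw [Finset.sum_eq_single ((s : ZMod n))]
        · rw [coeff_C_mul, coeff_X_pow, if_pos (ZMod.val_cast_of_lt hs).symm, mul_one]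
        · intro v _ hv
          rw [coeff_C_mul, coeff_X_pow, if_neg, mul_zero]
          intro heq
          exact hv (by rw [heq]; exact (ZMod.natCast_rightInverse v).symm)
        · intro hcon; exact absurd (Finset.mem_univ _) hcon
      have hProot : (aeval (Complex.exp (2 * Real.pi * Complex.I / n))) P = 0 := by
        rw [hP, map_sum, ← hf0]
        refine Finset.sum_congr rfl fun v _ => ?_
        rw [map_mul, aeval_C, map_pow, aeval_X]
        norm_num
      obtain ⟨q, hq⟩ := Stmt19Aux.dvd_of_aeval_zero n hn P hProot
      have hqd : q.natDegree ≤ n - Nat.totient n - 1 := by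
        by_cases h0 : q = 0
        · simp [h0]
        · have hΦ0 : cyclotomic n ℤ ≠ 0 := cyclotomic_ne_zero n ℤ
          have hmul := natDegree_mul hΦ0 h0
          rw [← hq, natDegree_cyclotomic] at hmul
          omega
      have hsum : ∑ k ∈ Finset.range n, W.coeff k * xe S x k = Stmt19Aux.pair n W P := by
        refine Finset.sum_congr rfl fun k hk => ?_
        by_cases h : k ∈ S
        · rw [xe_pos S _ h, hfs ⟨k, h⟩, ← hPcoeff k (hSn k h)]
        · rw [xe_neg S _ h, hWs k h]; simp
      rw [hsum, hq, Stmt19Aux.pair_mul_cyclo n j hn hj W q hWj hWsn hWp hqd]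
      push_cast
      rw [hcast0, mul_zero]
    · intro hx0
      have hdvd : ((cyclotomic n ℤ).coeff j) ∣ ∑ k ∈ Finset.range n, W.coeff k * xe S x k := by
        rw [← Int.natAbs_dvd, ← ZMod.intCast_zmod_eq_zero_iff_dvd]
        exact hx0
      obtain ⟨q, hq0, hqd, hqw0⟩ := Stmt19Aux.Q_exists n hn (xe S x) (n - Nat.totient n - 1) le_rfl
      have hqw : ∀ k, Nat.totient n + 1 ≤ k → k < n →
          (cyclotomic n ℤ * q).coeff k = xe S x k := by
        intro k h1 h2; exact hqw0 k (by omega) h2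
      have hpair : Stmt19Aux.pair n W (cyclotomic n ℤ * q) = 0 := by
        rw [Stmt19Aux.pair_mul_cyclo n j hn hj W q hWj hWsn hWp hqd, hq0, zero_mul]
      have hdiff : (∑ k ∈ Finset.range n, W.coeff k * xe S x k)
          - Stmt19Aux.pair n W (cyclotomic n ℤ * q)
          = xe S x j - (cyclotomic n ℤ * q).coeff j := by
        rw [Stmt19Aux.pair, ← Finset.sum_sub_distrib]
        rw [Finset.sum_eq_single j]
        · rw [hWj]; ring
        · intro k hkr hkj
          by_cases h : k ∈ S
          · rcases (hmemS k).1 h with rfl | hIco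
            · exact absurd rfl hkj
            · rw [hqw k hIco.1 hIco.2]; ring
          · rw [hWs k h]; ring
        · intro hcon; exact absurd (Finset.mem_range.mpr hjn) hcon
      rw [hpair, sub_zero] at hdiff
      obtain ⟨m, hm⟩ := hdvd
      have hxj : xe S x j = (cyclotomic n ℤ * q).coeff j + (cyclotomic n ℤ).coeff j * m := by
        linarith [hdiff, hm]
      show x ∈ B
      rw [← SetLike.mem_coe, hB]
      refine ⟨fun v => (cyclotomic n ℤ * (q + C m)).coeff v.val, ?_, ?_⟩
      · have hdeg : (cyclotomic n ℤ * (q + C m)).natDegree < n := by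
          refine Nat.lt_of_le_of_lt natDegree_mul_le ?_
          have h1 : (q + C m).natDegree ≤ n - Nat.totient n - 1 := by
            refine le_trans (natDegree_add_le _ _) (max_le hqd ?_)
            rw [natDegree_C]
            omega
          rw [natDegree_cyclotomic]
          omega
        rw [Stmt19Aux.sum_val n _ hdeg, map_mul, Stmt19Aux.aeval_cyclo n hn, zero_mul]
      · intro s
        have hsn : (s : ℕ) < n := hSn (s : ℕ) s.2
        have hval : ((((s : ℕ) : ZMod n)).val) = (s : ℕ) := ZMod.val_cast_of_lt hsn
        show x s = (cyclotomic n ℤ * (q + C m)).coeff ((((s : ℕ) : ZMod n)).val)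
        rw [hval]
        have hcoeff : (cyclotomic n ℤ * (q + C m)).coeff (s : ℕ)
            = (cyclotomic n ℤ * q).coeff (s : ℕ)
              + m * (cyclotomic n ℤ).coeff (s : ℕ) := by
          rw [mul_add, coeff_add]
          congr 1
          rw [mul_comm (cyclotomic n ℤ) (C m), coeff_C_mul]
        rw [hcoeff]
        rcases (hmemS (s : ℕ)).1 s.2 with hsj | hIco
        · rw [hsj]
          have hseq : s = ⟨j, hjS⟩ := Subtype.ext hsj
          rw [hseq, ← xe_pos S x hjS, hxj]
          ring
        · rw [Stmt19Aux.coeff_cyclo_zero' n _ (by omega), mul_zero, add_zero,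
            hqw _ hIco.1 hIco.2, xe_pos S x s.2]
  exact ⟨(QuotientAddGroup.quotientAddEquivOfEq hker).trans
    (QuotientAddGroup.quotientKerEquivOfSurjective Λ hsurj)⟩
end
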